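/- arXiv:1704.07035 — 2 statements merged into one kernel-verified Lean document; each statement's English description precedes it below -/
import Mathlib

section
/- Suppose x_N = M and N ≥ 2, M ≥ 2. Then the function G_{M,N} satisfies the recursion G_{M,N}(u₁,…,u_N|v₁,…,v_M|x₁,…,x_N|a₁₂)|_{v_M = u_N} = ∏_{j=1}^{N−1} ([1 + u_N − u_j]/[1]) · ∏_{k=1}^{M−1} ([1 + u_N − v_k]/[1]) · G_{M−1,N−1}(u₁,…,u_{N−1}|v₁,…,v_{M−1}|x₁,…,x_{N−1}|a₁₂ + 1). -/
/-!
Setting `v_M = u_N` makes the factor `[u_{σ(j)} - v_M]` of `E_{M,N}` vanish for the row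
`j = σ⁻¹(N)` unless `j = N` (only the last row has `x_j = M`), so the permutation sum of
`E_{M,N}` runs over the permutations fixing `N`. For those, the last row contributes the
factors `[u_j - u_N]/[1]`, which cancel the corresponding factors `[1]/[u_j - u_N]` of the
pair product, the factor `∏_{k<M} [1 + u_N - v_k]/[1]`, and a diagonal factor `1`; what is
left is the summand of `E_{M-1,N-1}` at `a₁₂ + 1`.
-/

open Complex

noncomputable section

/-- The half period magnitude `K₁` for elliptic nome `q`. -/
def Kone (q : ℝ) : ℝ :=
  Real.pi / 2 * ∏' n : ℕ,
    ((1 + q ^ (2 * n + 1)) / (1 - q ^ (2 * n + 1)) *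
      ((1 - q ^ (2 * n + 2)) / (1 + q ^ (2 * n + 2)))) ^ 2

/-- The half period magnitude `K₂` for elliptic nome `q`. -/
def Ktwo (q : ℝ) : ℝ := -(Kone q / Real.pi) * Real.log q

/-- The elliptic theta function `H`. -/
def theta (q : ℝ) (u : ℂ) : ℂ :=
  2 * (q : ℂ) ^ (1 / 4 : ℂ) * Complex.sin (Real.pi * u / (2 * (Kone q : ℂ))) *
    ∏' n : ℕ,
      ((1 - 2 * (q : ℂ) ^ (2 * n + 2) * Complex.cos (Real.pi * u / (Kone q : ℂ)) +
          (q : ℂ) ^ (4 * n + 4)) * (1 - (q : ℂ) ^ (2 * n + 2)))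

/-- The bracket `[u] = H(λu)`. -/
def brak (q : ℝ) (lam : ℂ) (u : ℂ) : ℂ := theta q (lam * u)

/-- `x^M_k`: equals `x_k` for `k = 1,…,N` and `M+1` for `k = N+1`. -/
def xM (M N : ℕ) (x : ℕ → ℕ) (k : ℕ) : ℕ := if k = N + 1 then M + 1 else x k

/-- The elliptic Schur-type symmetric function `E_{M,N}`. -/
def ellE (q : ℝ) (lam : ℂ) (M N : ℕ) (u v : ℕ → ℂ) (x : ℕ → ℕ) (a12 : ℂ) : ℂ :=
  (∏ k ∈ Finset.Icc 1 N, ∏ j ∈ Finset.Icc (xM M N x k) (xM M N x (k + 1) - 2),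
      brak q lam (a12 + (j : ℂ) + (N : ℂ)) / brak q lam (a12 + (j : ℂ) + (N : ℂ) - (k : ℂ))) *
  ∑ σ : Equiv.Perm (Fin N),
    (∏ j : Fin N, ∏ k : Fin N,
        if (j : ℕ) < (k : ℕ) then
          brak q lam 1 / brak q lam (u ((σ j : ℕ) + 1) - u ((σ k : ℕ) + 1))
        else 1) *
    (∏ j : Fin N, ∏ k ∈ Finset.Icc (x ((j : ℕ) + 1) + 1) M,
        brak q lam (u ((σ j : ℕ) + 1) - v k) / brak q lam 1) *
    (∏ j : Fin N,
        brak q lam (-u ((σ j : ℕ) + 1) + v (x ((j : ℕ) + 1)) + a12 +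
            (x ((j : ℕ) + 1) : ℂ) + (N : ℂ) - 2) /
          brak q lam (a12 + (x ((j : ℕ) + 1) : ℂ) + (N : ℂ) - 2)) *
    (∏ j : Fin N, ∏ k ∈ Finset.Icc 1 (x ((j : ℕ) + 1) - 1),
        brak q lam (1 + u ((σ j : ℕ) + 1) - v k) / brak q lam 1)

/-- `G_{M,N}`: the product of the elliptic factors and `E_{M,N}`. -/
def ellG (q : ℝ) (lam : ℂ) (M N : ℕ) (u v : ℕ → ℂ) (x : ℕ → ℕ) (a12 : ℂ) : ℂ :=
  (∏ j : Fin N, ∏ k : Fin N,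
      if (j : ℕ) < (k : ℕ) then
        brak q lam (1 + u ((k : ℕ) + 1) - u ((j : ℕ) + 1)) / brak q lam 1
      else 1) *
  ellE q lam M N u v x a12

lemma brak_zero (q : ℝ) (lam : ℂ) : brak q lam 0 = 0 := by
  simp [brak, theta]

lemma Fin.prod_prod_ite_lt_succ {γ : Type*} [CommMonoid γ] (n : ℕ)
    (f : Fin (n + 1) → Fin (n + 1) → γ) :
    (∏ j : Fin (n + 1), ∏ k : Fin (n + 1), if (j : ℕ) < (k : ℕ) then f j k else 1) =
      (∏ j : Fin n, ∏ k : Fin n, if (j : ℕ) < (k : ℕ) then f j.castSucc k.castSucc else 1) *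
        ∏ j : Fin n, f j.castSucc (Fin.last n) := by
  rw [Fin.prod_univ_castSucc, ← Finset.prod_mul_distrib]
  have hlast : (∏ k : Fin (n + 1),
      if ((Fin.last n : Fin (n + 1)) : ℕ) < (k : ℕ) then f (Fin.last n) k else 1) = 1 :=
    Finset.prod_eq_one fun k _ => if_neg (by simpa using k.is_le)
  rw [hlast, mul_one]
  refine Finset.prod_congr rfl fun j _ => ?_
  rw [Fin.prod_univ_castSucc, if_pos (by simp)]
  simp only [Fin.val_castSucc]

lemma Fin.prod_univ_add_one_eq_prod_Icc {γ : Type*} [CommMonoid γ] (n : ℕ) (f : ℕ → γ) :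
    ∏ j : Fin n, f ((j : ℕ) + 1) = ∏ j ∈ Finset.Icc 1 n, f j := by
  rw [Fin.prod_univ_eq_prod_range (fun j => f (j + 1)), ← Finset.Ico_add_one_right_eq_Icc,
    Finset.prod_Ico_eq_prod_range]
  simp [add_comm]

section PermLast

variable {n : ℕ}

def Equiv.Perm.extendLast (σ : Equiv.Perm (Fin n)) : Equiv.Perm (Fin (n + 1)) :=
  finSuccEquivLast.symm.permCongr σ.optionCongr

@[simp] lemma Equiv.Perm.extendLast_castSucc (σ : Equiv.Perm (Fin n)) (i : Fin n) :
    σ.extendLast i.castSucc = (σ i).castSucc := by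
  simp [Equiv.Perm.extendLast, Equiv.permCongr_apply]

@[simp] lemma Equiv.Perm.extendLast_last (σ : Equiv.Perm (Fin n)) :
    σ.extendLast (Fin.last n) = Fin.last n := by
  simp [Equiv.Perm.extendLast, Equiv.permCongr_apply]

lemma Equiv.Perm.sum_eq_sum_extendLast {β : Type*} [AddCommMonoid β]
    (f : Equiv.Perm (Fin (n + 1)) → β) (hf : ∀ τ, τ (Fin.last n) ≠ Fin.last n → f τ = 0) :
    ∑ τ, f τ = ∑ σ : Equiv.Perm (Fin n), f σ.extendLast := by
  let e := Equiv.Perm.decomposeOption.symm.trans (finSuccEquivLast (n := n)).symm.permCongr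
  rw [← e.sum_comp, Fintype.sum_prod_type, Fintype.sum_option]
  have hsome (i : Fin n) (σ : Equiv.Perm (Fin n)) : f (e (some i, σ)) = 0 := by
    refine hf _ ?_
    simp [e, Equiv.permCongr_apply, (Fin.castSucc_lt_last i).ne]
  have hnone (σ : Equiv.Perm (Fin n)) : e (none, σ) = σ.extendLast := by
    ext i
    simp [e, Equiv.Perm.extendLast, Equiv.permCongr_apply]
  simp only [hsome, hnone, Finset.sum_const_zero, add_zero]

end PermLast

section Factors

variable (q : ℝ) (lam : ℂ)

def ellVandermonde (N : ℕ) (u : ℕ → ℂ) : ℂ :=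
  ∏ j : Fin N, ∏ k : Fin N,
    if (j : ℕ) < (k : ℕ) then
      brak q lam (1 + u ((k : ℕ) + 1) - u ((j : ℕ) + 1)) / brak q lam 1
    else 1

def ellPrefactor (M N : ℕ) (x : ℕ → ℕ) (a12 : ℂ) : ℂ :=
  ∏ k ∈ Finset.Icc 1 N, ∏ j ∈ Finset.Icc (xM M N x k) (xM M N x (k + 1) - 2),
    brak q lam (a12 + (j : ℂ) + (N : ℂ)) / brak q lam (a12 + (j : ℂ) + (N : ℂ) - (k : ℂ))

/-! The four factors of the summand of `E_{M,N}` at `σ`, in terms of `w j = u_{σ(j+1)}`: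
rows `j : Fin N` are `0`-based, while `x` and `v` are `1`-based. -/

def ellPairFactor (N : ℕ) (w : Fin N → ℂ) : ℂ :=
  ∏ j : Fin N, ∏ k : Fin N,
    if (j : ℕ) < (k : ℕ) then brak q lam 1 / brak q lam (w j - w k) else 1

def ellUpperFactor (M N : ℕ) (w : Fin N → ℂ) (v : ℕ → ℂ) (x : ℕ → ℕ) : ℂ :=
  ∏ j : Fin N, ∏ k ∈ Finset.Icc (x ((j : ℕ) + 1) + 1) M, brak q lam (w j - v k) / brak q lam 1

def ellDiagFactor (N : ℕ) (w : Fin N → ℂ) (v : ℕ → ℂ) (x : ℕ → ℕ) (a12 : ℂ) : ℂ :=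
  ∏ j : Fin N,
    brak q lam (-w j + v (x ((j : ℕ) + 1)) + a12 + (x ((j : ℕ) + 1) : ℂ) + (N : ℂ) - 2) /
      brak q lam (a12 + (x ((j : ℕ) + 1) : ℂ) + (N : ℂ) - 2)

def ellLowerFactor (N : ℕ) (w : Fin N → ℂ) (v : ℕ → ℂ) (x : ℕ → ℕ) : ℂ :=
  ∏ j : Fin N, ∏ k ∈ Finset.Icc 1 (x ((j : ℕ) + 1) - 1),
    brak q lam (1 + w j - v k) / brak q lam 1

def ellTerm (M N : ℕ) (w : Fin N → ℂ) (v : ℕ → ℂ) (x : ℕ → ℕ) (a12 : ℂ) : ℂ :=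
  ellPairFactor q lam N w * ellUpperFactor q lam M N w v x * ellDiagFactor q lam N w v x a12 *
    ellLowerFactor q lam N w v x

lemma ellE_eq (M N : ℕ) (u v : ℕ → ℂ) (x : ℕ → ℕ) (a12 : ℂ) :
    ellE q lam M N u v x a12 = ellPrefactor q lam M N x a12 *
      ∑ σ : Equiv.Perm (Fin N), ellTerm q lam M N (fun j => u ((σ j : ℕ) + 1)) v x a12 :=
  rfl

lemma ellG_eq (M N : ℕ) (u v : ℕ → ℂ) (x : ℕ → ℕ) (a12 : ℂ) :
    ellG q lam M N u v x a12 = ellVandermonde q lam N u * ellE q lam M N u v x a12 :=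
  rfl

end Factors

section Recursion

variable (q : ℝ) (lam : ℂ) {m n : ℕ} {x : ℕ → ℕ}

lemma ellVandermonde_succ (u : ℕ → ℂ) :
    ellVandermonde q lam (n + 1) u = ellVandermonde q lam n u *
      ∏ j ∈ Finset.Icc 1 n, brak q lam (1 + u (n + 1) - u j) / brak q lam 1 := by
  rw [ellVandermonde, Fin.prod_prod_ite_lt_succ, ← Fin.prod_univ_add_one_eq_prod_Icc]
  simp only [Fin.val_castSucc, Fin.val_last, ellVandermonde]

lemma ellPrefactor_succ (hxN : x (n + 1) = m + 1) (a12 : ℂ) :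
    ellPrefactor q lam (m + 1) (n + 1) x a12 = ellPrefactor q lam m n x (a12 + 1) := by
  have hlast : xM (m + 1) (n + 1) x (n + 1) = m + 1 := by simp [xM, hxN]
  have hlast' : xM (m + 1) (n + 1) x (n + 1 + 1) = m + 2 := by simp [xM]
  rw [ellPrefactor, Finset.prod_Icc_succ_top (by omega), hlast, hlast',
    Finset.Icc_eq_empty (a := m + 1) (b := m + 2 - 2) (by omega), Finset.prod_empty, mul_one,
    ellPrefactor]
  refine Finset.prod_congr rfl fun k hk => ?_
  have hkn := (Finset.mem_Icc.mp hk).2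
  have hxk : xM (m + 1) (n + 1) x k = xM m n x k := by
    unfold xM; rw [if_neg (by omega), if_neg (by omega)]
  have hxk' : xM (m + 1) (n + 1) x (k + 1) = xM m n x (k + 1) := by
    unfold xM
    rcases hkn.lt_or_eq with hlt | rfl
    · rw [if_neg (by omega), if_neg (by omega)]
    · simp [hxN]
  rw [hxk, hxk']
  refine Finset.prod_congr rfl fun j _ => ?_
  congr 2 <;> push_cast <;> ring

variable (w : Fin n → ℂ) (c : ℂ) (v : ℕ → ℂ)

lemma ellPairFactor_snoc :
    ellPairFactor q lam (n + 1) (Fin.snoc w c) =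
      ellPairFactor q lam n w * ∏ j, brak q lam 1 / brak q lam (w j - c) := by
  rw [ellPairFactor, Fin.prod_prod_ite_lt_succ]
  simp only [Fin.snoc_castSucc, Fin.snoc_last, ellPairFactor]

variable (hx : ∀ j : Fin n, x ((j : ℕ) + 1) ≤ m) (hxN : x (n + 1) = m + 1)
include hx hxN

lemma ellUpperFactor_snoc :
    ellUpperFactor q lam (m + 1) (n + 1) (Fin.snoc w c) (Function.update v (m + 1) c) x =
      ellUpperFactor q lam m n w v x * ∏ j, brak q lam (w j - c) / brak q lam 1 := by
  rw [ellUpperFactor, Fin.prod_univ_castSucc, Fin.val_last, hxN,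
    Finset.Icc_eq_empty (a := m + 1 + 1) (by omega), Finset.prod_empty, mul_one,
    ellUpperFactor, ← Finset.prod_mul_distrib]
  refine Finset.prod_congr rfl fun j _ => ?_
  rw [Fin.val_castSucc, Finset.prod_Icc_succ_top (by have := hx j; omega)]
  simp only [Fin.snoc_castSucc, Function.update_self]
  congr 1
  refine Finset.prod_congr rfl fun k hk => ?_
  rw [Function.update_of_ne (by have := (Finset.mem_Icc.mp hk).2; omega)]

lemma ellDiagFactor_snoc (a12 : ℂ) (ha : brak q lam (a12 + m + n) ≠ 0) :
    ellDiagFactor q lam (n + 1) (Fin.snoc w c) (Function.update v (m + 1) c) x a12 =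
      ellDiagFactor q lam n w v x (a12 + 1) := by
  rw [ellDiagFactor, Fin.prod_univ_castSucc, Fin.val_last, hxN, Function.update_self,
    Fin.snoc_last]
  have hlast : brak q lam (-c + c + a12 + ((m + 1 : ℕ) : ℂ) + ((n + 1 : ℕ) : ℂ) - 2) /
      brak q lam (a12 + ((m + 1 : ℕ) : ℂ) + ((n + 1 : ℕ) : ℂ) - 2) = 1 := by
    convert div_self ha using 3 <;> push_cast <;> ring
  rw [hlast, mul_one, ellDiagFactor]
  refine Finset.prod_congr rfl fun j _ => ?_
  rw [Fin.val_castSucc, Fin.snoc_castSucc, Function.update_of_ne (by have := hx j; omega)]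
  congr 2 <;> push_cast <;> ring

lemma ellLowerFactor_snoc :
    ellLowerFactor q lam (n + 1) (Fin.snoc w c) (Function.update v (m + 1) c) x =
      ellLowerFactor q lam n w v x *
        ∏ k ∈ Finset.Icc 1 m, brak q lam (1 + c - v k) / brak q lam 1 := by
  have hv (k : ℕ) (hk : k ≤ m) : Function.update v (m + 1) c k = v k :=
    Function.update_of_ne (by omega) _ _
  rw [ellLowerFactor, Fin.prod_univ_castSucc, Fin.val_last, hxN, Nat.add_sub_cancel,
    Fin.snoc_last, ellLowerFactor]
  congr 1
  · refine Finset.prod_congr rfl fun j _ => Finset.prod_congr rfl fun k hk => ?_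
    have := hx j
    rw [Fin.snoc_castSucc, hv k (by have := (Finset.mem_Icc.mp hk).2; omega)]
  · exact Finset.prod_congr rfl fun k hk => by rw [hv k (Finset.mem_Icc.mp hk).2]

lemma ellTerm_snoc (a12 : ℂ) (h1 : brak q lam 1 ≠ 0) (hw : ∀ j, brak q lam (w j - c) ≠ 0)
    (ha : brak q lam (a12 + m + n) ≠ 0) :
    ellTerm q lam (m + 1) (n + 1) (Fin.snoc w c) (Function.update v (m + 1) c) x a12 =
      (∏ k ∈ Finset.Icc 1 m, brak q lam (1 + c - v k) / brak q lam 1) *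
        ellTerm q lam m n w v x (a12 + 1) := by
  have hcancel : (∏ j, brak q lam 1 / brak q lam (w j - c)) *
      ∏ j, brak q lam (w j - c) / brak q lam 1 = 1 := by
    rw [← Finset.prod_mul_distrib]
    exact Finset.prod_eq_one fun j _ => by field_simp [hw j, h1]
  rw [ellTerm, ellPairFactor_snoc, ellUpperFactor_snoc q lam w c v hx hxN,
    ellDiagFactor_snoc q lam w c v hx hxN a12 ha, ellLowerFactor_snoc q lam w c v hx hxN,
    ellTerm]
  linear_combination (ellPairFactor q lam n w * ellUpperFactor q lam m n w v x *
    ellDiagFactor q lam n w v x (a12 + 1) * ellLowerFactor q lam n w v x *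
    ∏ k ∈ Finset.Icc 1 m, brak q lam (1 + c - v k) / brak q lam 1) * hcancel

end Recursion

lemma ellTerm_eq_zero_of_eq (q : ℝ) (lam : ℂ) {M N : ℕ} (w : Fin N → ℂ) (v : ℕ → ℂ)
    (x : ℕ → ℕ) (a12 : ℂ) (j : Fin N) {k : ℕ} (hxk : x ((j : ℕ) + 1) < k) (hkM : k ≤ M)
    (hwv : w j = v k) : ellTerm q lam M N w v x a12 = 0 := by
  have hupper : ellUpperFactor q lam M N w v x = 0 := by
    refine Finset.prod_eq_zero (Finset.mem_univ j) (Finset.prod_eq_zero (i := k) ?_ ?_)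
    · exact Finset.mem_Icc.mpr ⟨hxk, hkM⟩
    · rw [hwv, sub_self, brak_zero, zero_div]
  rw [ellTerm, hupper, mul_zero, zero_mul, zero_mul]

theorem statement16_general (q : ℝ) (lam : ℂ)
    (M N : ℕ) (hN : 2 ≤ N) (hM : 2 ≤ M)
    (u v : ℕ → ℂ) (x : ℕ → ℕ)
    (hxmono : ∀ j k, 1 ≤ j → j < k → k ≤ N → x j < x k)
    (hxN : x N = M) (a12 : ℂ)
    (hbr1 : brak q lam 1 ≠ 0)
    (hbrA : ∀ n : ℤ, brak q lam (a12 + (n : ℂ)) ≠ 0)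
    (hu : ∀ j k, 1 ≤ j → j ≤ N → 1 ≤ k → k ≤ N → j ≠ k → brak q lam (u j - u k) ≠ 0) :
    ellG q lam M N u (Function.update v M (u N)) x a12 =
      (∏ j ∈ Finset.Icc 1 (N - 1), brak q lam (1 + u N - u j) / brak q lam 1) *
      (∏ k ∈ Finset.Icc 1 (M - 1), brak q lam (1 + u N - v k) / brak q lam 1) *
      ellG q lam (M - 1) (N - 1) u v x (a12 + 1) := by
  obtain ⟨n, rfl⟩ : ∃ n, N = n + 1 := ⟨N - 1, by omega⟩
  obtain ⟨m, rfl⟩ : ∃ m, M = m + 1 := ⟨M - 1, by omega⟩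
  have hx (j : Fin n) : x ((j : ℕ) + 1) ≤ m := by
    have := hxmono ((j : ℕ) + 1) (n + 1) (by omega) (by omega) le_rfl
    omega
  have hsnoc (σ : Equiv.Perm (Fin n)) : (fun j => u ((σ.extendLast j : ℕ) + 1)) =
      Fin.snoc (fun j => u ((σ j : ℕ) + 1)) (u (n + 1)) := by
    funext j
    induction j using Fin.lastCases <;> simp
  have hterm (σ : Equiv.Perm (Fin n)) :
      ellTerm q lam (m + 1) (n + 1) (fun j => u ((σ.extendLast j : ℕ) + 1))
          (Function.update v (m + 1) (u (n + 1))) x a12 =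
        (∏ k ∈ Finset.Icc 1 m, brak q lam (1 + u (n + 1) - v k) / brak q lam 1) *
          ellTerm q lam m n (fun j => u ((σ j : ℕ) + 1)) v x (a12 + 1) := by
    refine hsnoc σ ▸ ellTerm_snoc q lam _ _ v hx hxN a12 hbr1 (fun j => ?_) ?_
    · exact hu _ _ (by omega) (by omega) (by omega) le_rfl (by omega)
    · simpa [add_assoc] using hbrA (m + n)
  have hvanish (τ : Equiv.Perm (Fin (n + 1))) (hτ : τ (Fin.last n) ≠ Fin.last n) :
      ellTerm q lam (m + 1) (n + 1) (fun j => u ((τ j : ℕ) + 1))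
        (Function.update v (m + 1) (u (n + 1))) x a12 = 0 := by
    set j := τ.symm (Fin.last n)
    have hτj : τ j = Fin.last n := τ.apply_symm_apply _
    have hj : (j : ℕ) < n := Fin.val_lt_last fun h => hτ (h ▸ hτj)
    refine ellTerm_eq_zero_of_eq q lam _ _ x a12 j (k := m + 1) ?_ le_rfl ?_
    · exact Nat.lt_succ_of_le (hx ⟨j, hj⟩)
    · simp [hτj]
  simp only [Nat.add_sub_cancel, ellG_eq, ellE_eq, ellVandermonde_succ, ellPrefactor_succ q lam hxN,
    Equiv.Perm.sum_eq_sum_extendLast _ hvanish, hterm, ← Finset.mul_sum]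
  ring

/-- if `x_N = M` and `N ≥ 2`, `M ≥ 2`, then `G_{M,N}` satisfies the
recursion
`G_{M,N}(…)|_{v_M = u_N} = ∏_{j=1}^{N-1}([1+u_N-u_j]/[1]) ∏_{k=1}^{M-1}([1+u_N-v_k]/[1])
  · G_{M-1,N-1}(u₁,…,u_{N-1}|v₁,…,v_{M-1}|x₁,…,x_{N-1}|a₁₂+1)`. -/
theorem statement16 (q : ℝ) (hq0 : 0 < q) (hq1 : q < 1) (lam : ℂ) (hlam : lam ≠ 0)
    (M N : ℕ) (hN : 2 ≤ N) (hM : 2 ≤ M) (hNM : N ≤ M)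
    (u v : ℕ → ℂ) (x : ℕ → ℕ)
    (hx1 : 1 ≤ x 1) (hxmono : ∀ j k, 1 ≤ j → j < k → k ≤ N → x j < x k)
    (hxN : x N = M) (a12 : ℂ)
    (hbr1 : brak q lam 1 ≠ 0)
    (hbrA : ∀ n : ℤ, brak q lam (a12 + (n : ℂ)) ≠ 0)
    (hbrA' : ∀ n : ℤ, brak q lam (-a12 + (n : ℂ)) ≠ 0)
    (hu : ∀ j k, 1 ≤ j → j ≤ N → 1 ≤ k → k ≤ N → j ≠ k → brak q lam (u j - u k) ≠ 0) :
    ellG q lam M N u (Function.update v M (u N)) x a12 =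
      (∏ j ∈ Finset.Icc 1 (N - 1), brak q lam (1 + u N - u j) / brak q lam 1) *
      (∏ k ∈ Finset.Icc 1 (M - 1), brak q lam (1 + u N - v k) / brak q lam 1) *
      ellG q lam (M - 1) (N - 1) u v x (a12 + 1) :=
  statement16_general q lam M N hN hM u v x hxmono hxN a12 hbr1 hbrA hu

end
end

section
/- Suppose x_N ≠ M (so x_N < M). Then the function G_{M,N} factorizes as G_{M,N}(u₁,…,u_N|v₁,…,v_M|x₁,…,x_N|a₁₂) = ([a₂₁ − M − N + 1]/[a₂₁ − M + 1]) · ∏_{j=1}^N ([u_j − v_M]/[1]) · G_{M−1,N}(u₁,…,u_N|v₁,…,v_{M−1}|x₁,…,x_N|a₁₂), where a₂₁ = −a₁₂. -/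
open Complex

noncomputable section

lemma theta_neg (q : ℝ) (u : ℂ) : theta q (-u) = - theta q u := by
  unfold theta
  have h1 : (Real.pi : ℂ) * -u / (2 * (Kone q : ℂ)) =
      -((Real.pi : ℂ) * u / (2 * (Kone q : ℂ))) := by ring
  have h2 : (Real.pi : ℂ) * -u / ((Kone q : ℂ)) =
      -((Real.pi : ℂ) * u / ((Kone q : ℂ))) := by ring
  rw [h1, Complex.sin_neg]
  simp only [h2, Complex.cos_neg]
  ring

lemma brak_neg (q : ℝ) (lam : ℂ) (u : ℂ) : brak q lam (-u) = - brak q lam u := by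
  unfold brak
  rw [show lam * (-u) = -(lam * u) by ring, theta_neg]

/-- if `x_N ≠ M` (so `x_N < M`), then `G_{M,N}` factorizes as
`G_{M,N}(…) = ([a₂₁-M-N+1]/[a₂₁-M+1]) ∏_{j=1}^N ([u_j-v_M]/[1]) · G_{M-1,N}(…)`,
where `a₂₁ = -a₁₂`. -/
theorem statement17 (q : ℝ) (hq0 : 0 < q) (hq1 : q < 1) (lam : ℂ) (hlam : lam ≠ 0)
    (M N : ℕ) (hN : 1 ≤ N) (hNM : N ≤ M)
    (u v : ℕ → ℂ) (x : ℕ → ℕ)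
    (hx1 : 1 ≤ x 1) (hxmono : ∀ j k, 1 ≤ j → j < k → k ≤ N → x j < x k)
    (hxN : x N < M) (a12 : ℂ)
    (hbr1 : brak q lam 1 ≠ 0)
    (hbrA : ∀ n : ℤ, brak q lam (a12 + (n : ℂ)) ≠ 0)
    (hbrA' : ∀ n : ℤ, brak q lam (-a12 + (n : ℂ)) ≠ 0)
    (hu : ∀ j k, 1 ≤ j → j ≤ N → 1 ≤ k → k ≤ N → j ≠ k → brak q lam (u j - u k) ≠ 0) :
    ellG q lam M N u v x a12 =
      brak q lam (-a12 - (M : ℂ) - (N : ℂ) + 1) / brak q lam (-a12 - (M : ℂ) + 1) *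
      (∏ j ∈ Finset.Icc 1 N, brak q lam (u j - v M) / brak q lam 1) *
      ellG q lam (M - 1) N u v x a12 := by
  have hxN1 : 1 ≤ x N := by
    rcases eq_or_lt_of_le hN with h | h
    · rw [← h]; exact hx1
    · exact le_of_lt (lt_of_le_of_lt hx1 (hxmono 1 N le_rfl h le_rfl))
  have hM2 : 2 ≤ M := by omega
  have hxj : ∀ j : Fin N, x ((j : ℕ) + 1) ≤ M - 1 := by
    intro j
    have hle : (j : ℕ) + 1 ≤ N := j.2
    have : x ((j : ℕ) + 1) ≤ x N := by
      rcases eq_or_lt_of_le hle with h | h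
      · rw [h]
      · exact le_of_lt (hxmono _ _ (Nat.le_add_left 1 _) h le_rfl)
    omega
  have hsplit : ∀ g : ℕ → ℂ,
      (∏ k ∈ Finset.Icc 1 N, g k) = (∏ k ∈ Finset.Icc 1 (N - 1), g k) * g N := by
    intro g
    have h : N - 1 + 1 = N := by omega
    conv_lhs => rw [← h]
    rw [Finset.prod_Icc_succ_top (by omega), h]
  have hm1 : (((M - 2 + 1 : ℕ)) : ℂ) = (M : ℂ) - 1 := by
    have h : (M - 2 + 1 : ℕ) = M - 1 := by omega
    rw [h, Nat.cast_sub (by omega)]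
    norm_num
  have htop : brak q lam (a12 + ((M - 2 + 1 : ℕ) : ℂ) + (N : ℂ)) /
        brak q lam (a12 + ((M - 2 + 1 : ℕ) : ℂ) + (N : ℂ) - (N : ℂ)) =
      brak q lam (-a12 - (M : ℂ) - (N : ℂ) + 1) / brak q lam (-a12 - (M : ℂ) + 1) := by
    rw [hm1,
      show a12 + ((M : ℂ) - 1) + (N : ℂ) - (N : ℂ) = -(-a12 - (M : ℂ) + 1) by ring,
      show a12 + ((M : ℂ) - 1) + (N : ℂ) = -(-a12 - (M : ℂ) - (N : ℂ) + 1) by ring,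
      brak_neg, brak_neg, neg_div_neg_eq]
  have hmid : (∏ k ∈ Finset.Icc 1 (N - 1), ∏ j ∈ Finset.Icc (xM M N x k) (xM M N x (k + 1) - 2),
        brak q lam (a12 + (j : ℂ) + (N : ℂ)) / brak q lam (a12 + (j : ℂ) + (N : ℂ) - (k : ℂ)))
      = ∏ k ∈ Finset.Icc 1 (N - 1), ∏ j ∈ Finset.Icc (xM (M - 1) N x k) (xM (M - 1) N x (k + 1) - 2),
        brak q lam (a12 + (j : ℂ) + (N : ℂ)) / brak q lam (a12 + (j : ℂ) + (N : ℂ) - (k : ℂ)) := by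
    refine Finset.prod_congr rfl fun k hk => ?_
    simp only [Finset.mem_Icc] at hk
    have e1 : xM M N x k = x k := by unfold xM; rw [if_neg (by omega)]
    have e2 : xM M N x (k + 1) = x (k + 1) := by unfold xM; rw [if_neg (by omega)]
    have e3 : xM (M - 1) N x k = x k := by unfold xM; rw [if_neg (by omega)]
    have e4 : xM (M - 1) N x (k + 1) = x (k + 1) := by unfold xM; rw [if_neg (by omega)]
    rw [e1, e2, e3, e4]
  have hpre : (∏ k ∈ Finset.Icc 1 N, ∏ j ∈ Finset.Icc (xM M N x k) (xM M N x (k + 1) - 2),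
        brak q lam (a12 + (j : ℂ) + (N : ℂ)) / brak q lam (a12 + (j : ℂ) + (N : ℂ) - (k : ℂ)))
      = (brak q lam (-a12 - (M : ℂ) - (N : ℂ) + 1) / brak q lam (-a12 - (M : ℂ) + 1)) *
        ∏ k ∈ Finset.Icc 1 N, ∏ j ∈ Finset.Icc (xM (M - 1) N x k) (xM (M - 1) N x (k + 1) - 2),
        brak q lam (a12 + (j : ℂ) + (N : ℂ)) / brak q lam (a12 + (j : ℂ) + (N : ℂ) - (k : ℂ)) := by
    rw [hsplit (fun k => ∏ j ∈ Finset.Icc (xM M N x k) (xM M N x (k + 1) - 2),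
        brak q lam (a12 + (j : ℂ) + (N : ℂ)) / brak q lam (a12 + (j : ℂ) + (N : ℂ) - (k : ℂ))),
      hsplit (fun k => ∏ j ∈ Finset.Icc (xM (M - 1) N x k) (xM (M - 1) N x (k + 1) - 2),
        brak q lam (a12 + (j : ℂ) + (N : ℂ)) / brak q lam (a12 + (j : ℂ) + (N : ℂ) - (k : ℂ))),
      hmid]
    have e1 : xM M N x N = x N := by unfold xM; rw [if_neg (by omega)]
    have e2 : xM M N x (N + 1) = M + 1 := by unfold xM; rw [if_pos rfl]
    have e3 : xM (M - 1) N x N = x N := by unfold xM; rw [if_neg (by omega)]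
    have e4 : xM (M - 1) N x (N + 1) = M - 1 + 1 := by unfold xM; rw [if_pos rfl]
    rw [e1, e2, e3, e4]
    have ht : M + 1 - 2 = M - 2 + 1 := by omega
    have ht' : M - 1 + 1 - 2 = M - 2 := by omega
    rw [ht, ht', Finset.prod_Icc_succ_top (show x N ≤ M - 2 + 1 by omega), htop]
    ring
  have hC : ∀ σ : Equiv.Perm (Fin N),
      (∏ j : Fin N, brak q lam (u ((σ j : ℕ) + 1) - v M) / brak q lam 1)
        = ∏ j ∈ Finset.Icc 1 N, brak q lam (u j - v M) / brak q lam 1 := by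
    intro σ
    rw [Equiv.prod_comp σ (fun i : Fin N => brak q lam (u ((i : ℕ) + 1) - v M) / brak q lam 1),
      ← Finset.Ico_add_one_right_eq_Icc, Finset.prod_Ico_eq_prod_range,
      Fin.prod_univ_eq_prod_range (fun i => brak q lam (u (i + 1) - v M) / brak q lam 1) N]
    exact Finset.prod_congr (by norm_num) fun i _ => by rw [add_comm 1 i]
  have hinner : ∀ (j : Fin N) (w : ℂ),
      (∏ k ∈ Finset.Icc (x ((j : ℕ) + 1) + 1) M, brak q lam (w - v k) / brak q lam 1)
        = (∏ k ∈ Finset.Icc (x ((j : ℕ) + 1) + 1) (M - 1), brak q lam (w - v k) / brak q lam 1) *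
          (brak q lam (w - v M) / brak q lam 1) := by
    intro j w
    have hM : M - 1 + 1 = M := by omega
    conv_lhs => rw [← hM]
    rw [Finset.prod_Icc_succ_top (by have := hxj j; omega), hM]
  have hsum : (∑ σ : Equiv.Perm (Fin N),
      (∏ j : Fin N, ∏ k : Fin N,
          if (j : ℕ) < (k : ℕ) then
            brak q lam 1 / brak q lam (u ((σ j : ℕ) + 1) - u ((σ k : ℕ) + 1))
          else 1) *
      (∏ j : Fin N, ∏ k ∈ Finset.Icc (x ((j : ℕ) + 1) + 1) M,
          brak q lam (u ((σ j : ℕ) + 1) - v k) / brak q lam 1) *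
      (∏ j : Fin N,
          brak q lam (-u ((σ j : ℕ) + 1) + v (x ((j : ℕ) + 1)) + a12 +
              (x ((j : ℕ) + 1) : ℂ) + (N : ℂ) - 2) /
            brak q lam (a12 + (x ((j : ℕ) + 1) : ℂ) + (N : ℂ) - 2)) *
      (∏ j : Fin N, ∏ k ∈ Finset.Icc 1 (x ((j : ℕ) + 1) - 1),
          brak q lam (1 + u ((σ j : ℕ) + 1) - v k) / brak q lam 1))
      = (∏ j ∈ Finset.Icc 1 N, brak q lam (u j - v M) / brak q lam 1) *
        ∑ σ : Equiv.Perm (Fin N),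
      (∏ j : Fin N, ∏ k : Fin N,
          if (j : ℕ) < (k : ℕ) then
            brak q lam 1 / brak q lam (u ((σ j : ℕ) + 1) - u ((σ k : ℕ) + 1))
          else 1) *
      (∏ j : Fin N, ∏ k ∈ Finset.Icc (x ((j : ℕ) + 1) + 1) (M - 1),
          brak q lam (u ((σ j : ℕ) + 1) - v k) / brak q lam 1) *
      (∏ j : Fin N,
          brak q lam (-u ((σ j : ℕ) + 1) + v (x ((j : ℕ) + 1)) + a12 +
              (x ((j : ℕ) + 1) : ℂ) + (N : ℂ) - 2) /
            brak q lam (a12 + (x ((j : ℕ) + 1) : ℂ) + (N : ℂ) - 2)) *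
      (∏ j : Fin N, ∏ k ∈ Finset.Icc 1 (x ((j : ℕ) + 1) - 1),
          brak q lam (1 + u ((σ j : ℕ) + 1) - v k) / brak q lam 1) := by
    rw [Finset.mul_sum]
    refine Finset.sum_congr rfl fun σ _ => ?_
    have hS : (∏ j : Fin N, ∏ k ∈ Finset.Icc (x ((j : ℕ) + 1) + 1) M,
          brak q lam (u ((σ j : ℕ) + 1) - v k) / brak q lam 1)
        = (∏ j : Fin N, ∏ k ∈ Finset.Icc (x ((j : ℕ) + 1) + 1) (M - 1),
            brak q lam (u ((σ j : ℕ) + 1) - v k) / brak q lam 1) *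
          ∏ j ∈ Finset.Icc 1 N, brak q lam (u j - v M) / brak q lam 1 := by
      rw [show (∏ j : Fin N, ∏ k ∈ Finset.Icc (x ((j : ℕ) + 1) + 1) M,
            brak q lam (u ((σ j : ℕ) + 1) - v k) / brak q lam 1)
          = ∏ j : Fin N, ((∏ k ∈ Finset.Icc (x ((j : ℕ) + 1) + 1) (M - 1),
              brak q lam (u ((σ j : ℕ) + 1) - v k) / brak q lam 1) *
            (brak q lam (u ((σ j : ℕ) + 1) - v M) / brak q lam 1))
          from Finset.prod_congr rfl fun j _ => hinner j _,
        Finset.prod_mul_distrib, hC σ]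
    rw [hS]; ring
  unfold ellG ellE
  rw [hpre, hsum]
  ring

end
end
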